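/- arXiv:1311.6802 — 3 statements merged into one kernel-verified Lean document; each statement's English description precedes it below -/
import Mathlib

section
/- Let the marginal likelihood of a rating vector r given type t be g(t) = ∫_{ℝ^d} exp(−‖r − V u − z_t‖²/(2σ₀²)) · exp(−‖u‖²/(2σ_u²)) du. Then g(+1) ≥ g(−1) if and only if δᵀ M r̄ ≥ 0. Consequently, under a uniform prior on the two types, the maximum a-posteriori estimate of the type given the ratings r is t̂(r) = sgn(δᵀ M r̄) (Theorem 1, the Factor-Based Classifier). -/
open Matrix MeasureTheory Real

/-! Completing the square in `u`,
`‖a - V u‖² + λ ‖u‖² = (u - m)ᵀ Σ (u - m) + aᵀ M a` with `m = Σ⁻¹ Vᵀ a`,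
and translation invariance of Lebesgue measure make the integral over `u` independent of `m`.
Hence `g t = C · exp (-(r - z_t)ᵀ M (r - z_t) / (2σ₀²))` with `C > 0`, and since
`r - z_{±1} = r̄ ∓ δ` with `M` symmetric, the two exponents differ by `4 δᵀ M r̄ / (2σ₀²)`. -/

section QuadraticForms

variable {m n : Type*} [Fintype n]

lemma Matrix.IsSymm.dotProduct_mulVec_comm {S : Matrix n n ℝ} (hS : S.IsSymm) (x y : n → ℝ) :
    x ⬝ᵥ (S *ᵥ y) = (S *ᵥ x) ⬝ᵥ y := by
  rw [dotProduct_mulVec, ← mulVec_transpose, hS.eq]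

lemma Matrix.IsSymm.dotProduct_mulVec_add_sub_dotProduct_mulVec_sub {A : Matrix n n ℝ}
    (hA : A.IsSymm) (x y : n → ℝ) :
    (x + y) ⬝ᵥ (A *ᵥ (x + y)) - (x - y) ⬝ᵥ (A *ᵥ (x - y)) = 4 * (y ⬝ᵥ (A *ᵥ x)) := by
  have := hA.dotProduct_mulVec_comm x y
  simp only [mulVec_add, mulVec_sub, dotProduct_add, dotProduct_sub, add_dotProduct,
    sub_dotProduct, dotProduct_comm (A *ᵥ x) y] at this ⊢
  linarith

lemma Matrix.IsSymm.sub_inv_mulVec_dotProduct_mulVec [DecidableEq n] {S : Matrix n n ℝ}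
    (hS : S.IsSymm) (hdet : IsUnit S.det) (u b : n → ℝ) :
    (u - S⁻¹ *ᵥ b) ⬝ᵥ (S *ᵥ (u - S⁻¹ *ᵥ b)) =
      u ⬝ᵥ (S *ᵥ u) - 2 * (u ⬝ᵥ b) + b ⬝ᵥ (S⁻¹ *ᵥ b) := by
  have hSS : S *ᵥ (S⁻¹ *ᵥ b) = b := by rw [mulVec_mulVec, mul_nonsing_inv _ hdet, one_mulVec]
  have hcross : (S⁻¹ *ᵥ b) ⬝ᵥ (S *ᵥ u) = u ⬝ᵥ b := by
    rw [hS.dotProduct_mulVec_comm, hSS, dotProduct_comm]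
  rw [mulVec_sub, dotProduct_sub, sub_dotProduct, sub_dotProduct, hcross, hSS,
    dotProduct_comm (S⁻¹ *ᵥ b) b]
  ring

lemma Matrix.dotProduct_transpose_mul_self_mulVec [Fintype m] (V : Matrix m n ℝ) (x : n → ℝ) :
    x ⬝ᵥ ((Vᵀ * V) *ᵥ x) = (V *ᵥ x) ⬝ᵥ (V *ᵥ x) := by
  rw [← mulVec_mulVec, dotProduct_mulVec, vecMul_transpose]

end QuadraticForms

section Ridge

variable {m n : Type*} [Fintype m] [DecidableEq n] (V : Matrix m n ℝ) {lam : ℝ}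

/-- The paper's `Σ`; `ridgeResidualMatrix V λ` below is its `M`. -/
def ridgeGram (V : Matrix m n ℝ) (lam : ℝ) : Matrix n n ℝ := lam • 1 + Vᵀ * V

lemma ridgeGram_isSymm : (ridgeGram V lam).IsSymm := by
  simp [ridgeGram, IsSymm, transpose_add, transpose_smul, transpose_mul]

variable [Fintype n]

lemma ridgeGram_posDef (hlam : 0 < lam) : (ridgeGram V lam).PosDef := by
  simpa [ridgeGram] using (PosDef.one.smul hlam).add_posSemidef (posSemidef_conjTranspose_mul_self V)

lemma isUnit_det_ridgeGram (hlam : 0 < lam) : IsUnit (ridgeGram V lam).det :=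
  (isUnit_iff_isUnit_det _).mp (ridgeGram_posDef V hlam).isUnit

lemma dotProduct_ridgeGram_mulVec (x : n → ℝ) :
    x ⬝ᵥ (ridgeGram V lam *ᵥ x) = lam * (x ⬝ᵥ x) + (V *ᵥ x) ⬝ᵥ (V *ᵥ x) := by
  rw [ridgeGram, add_mulVec, dotProduct_add, smul_mulVec, one_mulVec, dotProduct_smul,
    dotProduct_transpose_mul_self_mulVec, smul_eq_mul]

variable [DecidableEq m]

noncomputable def ridgeResidualMatrix (V : Matrix m n ℝ) (lam : ℝ) : Matrix m m ℝ :=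
  1 - V * (ridgeGram V lam)⁻¹ * Vᵀ

lemma ridgeResidualMatrix_isSymm : (ridgeResidualMatrix V lam).IsSymm := by
  simp [ridgeResidualMatrix, IsSymm, transpose_nonsing_inv, (ridgeGram_isSymm V).eq,
    Matrix.mul_assoc]

lemma dotProduct_ridgeResidualMatrix_mulVec (a : m → ℝ) :
    a ⬝ᵥ (ridgeResidualMatrix V lam *ᵥ a) =
      a ⬝ᵥ a - (Vᵀ *ᵥ a) ⬝ᵥ ((ridgeGram V lam)⁻¹ *ᵥ (Vᵀ *ᵥ a)) := by
  rw [ridgeResidualMatrix, sub_mulVec, dotProduct_sub, one_mulVec, ← mulVec_mulVec,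
    ← mulVec_mulVec, dotProduct_mulVec a V, ← mulVec_transpose]

lemma residual_sq_add_ridge_eq (hlam : 0 < lam) (a : m → ℝ) (u : n → ℝ) :
    (a - V *ᵥ u) ⬝ᵥ (a - V *ᵥ u) + lam * (u ⬝ᵥ u) =
      (u - (ridgeGram V lam)⁻¹ *ᵥ (Vᵀ *ᵥ a)) ⬝ᵥ
          (ridgeGram V lam *ᵥ (u - (ridgeGram V lam)⁻¹ *ᵥ (Vᵀ *ᵥ a))) +
        a ⬝ᵥ (ridgeResidualMatrix V lam *ᵥ a) := by
  rw [(ridgeGram_isSymm V).sub_inv_mulVec_dotProduct_mulVec (isUnit_det_ridgeGram V hlam),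
    dotProduct_ridgeGram_mulVec, dotProduct_ridgeResidualMatrix_mulVec, dotProduct_mulVec u,
    vecMul_transpose]
  simp only [dotProduct_sub, sub_dotProduct, dotProduct_comm a (V *ᵥ u)]
  ring

end Ridge

lemma integrable_exp_neg_mul_dotProduct_self {ι : Type*} [Fintype ι] {b : ℝ} (hb : 0 < b) :
    Integrable fun u : ι → ℝ => exp (-b * (u ⬝ᵥ u)) := by
  have hprod : (fun u : ι → ℝ => exp (-b * (u ⬝ᵥ u))) = fun u => ∏ i, exp (-b * u i ^ 2) := by
    ext u
    rw [← exp_sum, dotProduct, Finset.mul_sum]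
    simp only [sq]
  rw [hprod]
  exact Integrable.fintype_prod fun _ => integrable_exp_neg_mul_sq hb

section Likelihood

variable {m n : Type*} [Fintype m] [Fintype n] [DecidableEq n] (V : Matrix m n ℝ)

lemma integrable_exp_neg_dotProduct_ridgeGram_mulVec {lam c : ℝ} (hlam : 0 < lam) (hc : 0 < c) :
    Integrable fun u : n → ℝ => exp (-(u ⬝ᵥ (ridgeGram V lam *ᵥ u)) / c) := by
  refine (integrable_exp_neg_mul_dotProduct_self (div_pos hlam hc)).mono' (by fun_prop) ?_
  refine Filter.Eventually.of_forall fun u => ?_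
  rw [norm_of_nonneg (exp_pos _).le, exp_le_exp, dotProduct_ridgeGram_mulVec, neg_div, neg_mul,
    neg_le_neg_iff, div_mul_eq_mul_div, div_le_div_iff_of_pos_right hc, le_add_iff_nonneg_right]
  exact Finset.sum_nonneg fun i _ => mul_self_nonneg _

variable [DecidableEq m]

theorem exists_integral_factor_likelihood_eq {σ₀ σu : ℝ} (hσ₀ : 0 < σ₀) (hσu : 0 < σu) :
    ∃ C > 0, ∀ a : m → ℝ,
      ∫ u : n → ℝ, exp (-((a - V *ᵥ u) ⬝ᵥ (a - V *ᵥ u)) / (2 * σ₀ ^ 2)) *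
          exp (-(u ⬝ᵥ u) / (2 * σu ^ 2)) =
        exp (-(a ⬝ᵥ (ridgeResidualMatrix V (σ₀ ^ 2 / σu ^ 2) *ᵥ a)) / (2 * σ₀ ^ 2)) * C := by
  set lam := σ₀ ^ 2 / σu ^ 2
  have hlam : 0 < lam := by positivity
  have hc : 0 < 2 * σ₀ ^ 2 := by positivity
  set f : (n → ℝ) → ℝ := fun u => exp (-(u ⬝ᵥ (ridgeGram V lam *ᵥ u)) / (2 * σ₀ ^ 2))
  refine ⟨∫ u, f u, integral_exp_pos (integrable_exp_neg_dotProduct_ridgeGram_mulVec V hlam hc),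
    fun a => ?_⟩
  have hprior (u : n → ℝ) : -(u ⬝ᵥ u) / (2 * σu ^ 2) = -(lam * (u ⬝ᵥ u)) / (2 * σ₀ ^ 2) := by
    simp only [lam]
    field_simp
  have hsplit (u : n → ℝ) :
      exp (-((a - V *ᵥ u) ⬝ᵥ (a - V *ᵥ u)) / (2 * σ₀ ^ 2)) * exp (-(u ⬝ᵥ u) / (2 * σu ^ 2)) =
        f (u - (ridgeGram V lam)⁻¹ *ᵥ (Vᵀ *ᵥ a)) *
          exp (-(a ⬝ᵥ (ridgeResidualMatrix V lam *ᵥ a)) / (2 * σ₀ ^ 2)) := by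
    rw [hprior, ← exp_add, ← exp_add, ← add_div, ← add_div, ← neg_add, ← neg_add,
      residual_sq_add_ridge_eq V hlam]
  simp_rw [hsplit]
  rw [integral_mul_const, integral_sub_right_eq_self f, mul_comm]

end Likelihood

theorem fbc_map_classifier_general (d k : ℕ)
    (V : Matrix (Fin k) (Fin d) ℝ) (σ₀ σu : ℝ) (hσ₀ : 0 < σ₀) (hσu : 0 < σu)
    (lam : ℝ) (hlam : lam = σ₀ ^ 2 / σu ^ 2)
    (Sig : Matrix (Fin d) (Fin d) ℝ)
    (hSig : Sig = lam • (1 : Matrix (Fin d) (Fin d) ℝ) + Vᵀ * V)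
    (M : Matrix (Fin k) (Fin k) ℝ)
    (hM : M = (1 : Matrix (Fin k) (Fin k) ℝ) - V * Sig⁻¹ * Vᵀ)
    (zp zm r : Fin k → ℝ)
    (δ : Fin k → ℝ) (hδ : δ = (1 / 2 : ℝ) • (zp - zm))
    (rbar : Fin k → ℝ) (hrbar : rbar = r - (1 / 2 : ℝ) • (zp + zm))
    (z : ℤ → Fin k → ℝ) (hz₁ : z 1 = zp) (hz₂ : z (-1) = zm)
    (g : ℤ → ℝ)
    (hg : ∀ t : ℤ, g t =
      ∫ u : Fin d → ℝ,
        Real.exp (-((r - V.mulVec u - z t) ⬝ᵥ (r - V.mulVec u - z t)) / (2 * σ₀ ^ 2)) *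
          Real.exp (-(u ⬝ᵥ u) / (2 * σu ^ 2))) :
    (g 1 ≥ g (-1) ↔ δ ⬝ᵥ M.mulVec rbar ≥ 0) ∧
    (∀ t : ℤ, t = 1 ∨ t = -1 →
      g (if δ ⬝ᵥ M.mulVec rbar ≥ 0 then 1 else -1) ≥ g t) := by
  have hMres : M = ridgeResidualMatrix V (σ₀ ^ 2 / σu ^ 2) := by subst hlam hSig hM; rfl
  obtain ⟨C, hC, hlik⟩ := exists_integral_factor_likelihood_eq V hσ₀ hσu
  have hg_eq (t : ℤ) : g t = exp (-((r - z t) ⬝ᵥ (M *ᵥ (r - z t))) / (2 * σ₀ ^ 2)) * C := by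
    rw [hg t, hMres, ← hlik]
    simp_rw [sub_right_comm r]
  have hplus : r - z 1 = rbar - δ := by rw [hz₁, hδ, hrbar]; module
  have hminus : r - z (-1) = rbar + δ := by rw [hz₂, hδ, hrbar]; module
  have hsymm := hMres ▸ ridgeResidualMatrix_isSymm V
  have main : g 1 ≥ g (-1) ↔ δ ⬝ᵥ M *ᵥ rbar ≥ 0 := by
    rw [hg_eq, hg_eq, hplus, hminus, ge_iff_le, mul_le_mul_iff_left₀ hC, exp_le_exp,
      div_le_div_iff_of_pos_right (by positivity), neg_le_neg_iff, ← sub_nonneg,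
      hsymm.dotProduct_mulVec_add_sub_dotProduct_mulVec_sub]
    exact mul_nonneg_iff_of_pos_left four_pos
  refine ⟨main, fun t ht => ?_⟩
  split_ifs with hpos <;> rcases ht with rfl | rfl
  · exact le_rfl
  · exact main.mpr hpos
  · exact (lt_of_not_ge (mt main.mp hpos)).le
  · exact le_rfl

/-- **Theorem 1 (Factor-Based Classifier).**
With marginal likelihood `g t = ∫ exp(−‖r − V u − z_t‖²/(2σ₀²)) exp(−‖u‖²/(2σ_u²)) du`,
we have `g(+1) ≥ g(−1)` iff `δᵀ M r̄ ≥ 0`; consequently, under a uniform prior on the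
two types the MAP estimate of the type is `t̂(r) = sgn(δᵀ M r̄)`. -/
theorem fbc_map_classifier (d k : ℕ) (hd : 0 < d) (hk : 0 < k)
    (V : Matrix (Fin k) (Fin d) ℝ) (σ₀ σu : ℝ) (hσ₀ : 0 < σ₀) (hσu : 0 < σu)
    (lam : ℝ) (hlam : lam = σ₀ ^ 2 / σu ^ 2)
    (Sig : Matrix (Fin d) (Fin d) ℝ)
    (hSig : Sig = lam • (1 : Matrix (Fin d) (Fin d) ℝ) + Vᵀ * V)
    (M : Matrix (Fin k) (Fin k) ℝ)
    (hM : M = (1 : Matrix (Fin k) (Fin k) ℝ) - V * Sig⁻¹ * Vᵀ)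
    (zp zm r : Fin k → ℝ)
    (δ : Fin k → ℝ) (hδ : δ = (1 / 2 : ℝ) • (zp - zm))
    (rbar : Fin k → ℝ) (hrbar : rbar = r - (1 / 2 : ℝ) • (zp + zm))
    (z : ℤ → Fin k → ℝ) (hz₁ : z 1 = zp) (hz₂ : z (-1) = zm)
    (g : ℤ → ℝ)
    (hg : ∀ t : ℤ, g t =
      ∫ u : Fin d → ℝ,
        Real.exp (-((r - V.mulVec u - z t) ⬝ᵥ (r - V.mulVec u - z t)) / (2 * σ₀ ^ 2)) *
          Real.exp (-(u ⬝ᵥ u) / (2 * σu ^ 2))) :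
    (g 1 ≥ g (-1) ↔ δ ⬝ᵥ M.mulVec rbar ≥ 0) ∧
    (∀ t : ℤ, t = 1 ∨ t = -1 →
      g (if δ ⬝ᵥ M.mulVec rbar ≥ 0 then 1 else -1) ≥ g t) :=
  fbc_map_classifier_general d k V σ₀ σu hσ₀ hσu lam hlam Sig hSig M hM zp zm r δ hδ rbar hrbar z
    hz₁ hz₂ g hg
end

section
/- For every vector w ∈ ℝ^k, ∫_{ℝ^d} exp(−‖w − V u‖²/(2σ₀²) − ‖u‖²/(2σ_u²)) du = (σ₀ √(2π))^d · (det Σ)^{−1/2} · exp( wᵀ (V Σ⁻¹ Vᵀ − I_k) w / (2σ₀²) ). -/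
/-!
Completing the square in `u` writes the exponent as `-(u - μ)ᵀ Σ (u - μ) / (2σ₀²)` plus a term
free of `u`, where `μ = Σ⁻¹ Vᵀ w`. After translating by `μ`, the substitution `v = B u` for a
factorization `Σ = Bᵀ B` turns the integral into an isotropic Gaussian integral, a product of
one-dimensional ones, at the cost of the Jacobian `|det B|⁻¹ = (det Σ)^(-1/2)`.
-/

open Matrix MeasureTheory Real

theorem integral_exp_neg_mul_self_div {σ : ℝ} (hσ : 0 < σ) :
    ∫ x : ℝ, exp (-(x * x) / (2 * σ ^ 2)) = σ * √(2 * π) := by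
  have hπ : π / (2 * σ ^ 2)⁻¹ = σ ^ 2 * (2 * π) := by field_simp
  simp_rw [← sq, neg_div, div_eq_inv_mul _ (2 * σ ^ 2), ← neg_mul]
  rw [integral_gaussian, hπ, sqrt_mul (sq_nonneg σ), sqrt_sq hσ.le]

namespace Matrix

variable {ι κ : Type*} [Fintype ι] [Fintype κ]

theorem integral_exp_neg_dotProduct_self_div {σ : ℝ} (hσ : 0 < σ) :
    ∫ v : ι → ℝ, exp (-(v ⬝ᵥ v) / (2 * σ ^ 2)) = (σ * √(2 * π)) ^ Fintype.card ι := by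
  have hprod (v : ι → ℝ) :
      exp (-(v ⬝ᵥ v) / (2 * σ ^ 2)) = ∏ i, exp (-(v i * v i) / (2 * σ ^ 2)) := by
    rw [← exp_sum, dotProduct, ← Finset.sum_div, ← Finset.sum_neg_distrib]
  simp_rw [hprod]
  rw [integral_fintype_prod_volume_eq_pow (fun x : ℝ ↦ exp (-(x * x) / (2 * σ ^ 2))),
    integral_exp_neg_mul_self_div hσ]

variable [DecidableEq ι]

theorem integral_comp_mulVec {E : Type*} [NormedAddCommGroup E] [NormedSpace ℝ E]
    {M : Matrix ι ι ℝ} (hM : M.det ≠ 0) (f : (ι → ℝ) → E) :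
    ∫ x, f (M *ᵥ x) = |M.det|⁻¹ • ∫ x, f x := by
  have hinv : Invertible M := M.invertibleOfIsUnitDet (isUnit_iff_ne_zero.mpr hM)
  have hemb : MeasurableEmbedding (toLin' M) :=
    (toLinearEquiv' M hinv).toContinuousLinearEquiv.toHomeomorph.measurableEmbedding
  have h := hemb.integral_map (μ := volume) f
  rw [Real.map_matrix_volume_pi_eq_smul_volume_pi hM, integral_smul_measure,
    ENNReal.toReal_ofReal (by positivity), abs_inv] at h
  simpa only [toLin'_apply] using h.symm

open scoped MatrixOrder in
theorem PosDef.integral_exp_neg_dotProduct_mulVec_div {S : Matrix ι ι ℝ} (hS : S.PosDef)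
    {σ : ℝ} (hσ : 0 < σ) :
    ∫ v, exp (-(v ⬝ᵥ S *ᵥ v) / (2 * σ ^ 2))
      = (σ * √(2 * π)) ^ Fintype.card ι * (√S.det)⁻¹ := by
  obtain ⟨B, rfl⟩ := CStarAlgebra.nonneg_iff_eq_star_mul_self.mp hS.posSemidef.nonneg
  have hquad (v : ι → ℝ) : v ⬝ᵥ (star B * B) *ᵥ v = (B *ᵥ v) ⬝ᵥ (B *ᵥ v) := by
    rw [← mulVec_mulVec, dotProduct_mulVec, star_eq_conjTranspose,
      conjTranspose_eq_transpose_of_trivial, vecMul_transpose]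
  have hdet : (star B * B).det = B.det ^ 2 := by
    rw [det_mul, star_eq_conjTranspose, conjTranspose_eq_transpose_of_trivial, det_transpose, sq]
  have hB : B.det ≠ 0 := fun h ↦ hS.det_pos.ne' (by rw [hdet, h]; ring)
  simp_rw [hquad]
  rw [integral_comp_mulVec hB (fun v ↦ exp (-(v ⬝ᵥ v) / (2 * σ ^ 2))),
    integral_exp_neg_dotProduct_self_div hσ, hdet, sqrt_sq_eq_abs, smul_eq_mul, mul_comm]

theorem posDef_smul_one_add_transpose_mul {lam : ℝ} (hlam : 0 < lam) (V : Matrix κ ι ℝ) :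
    (lam • (1 : Matrix ι ι ℝ) + Vᵀ * V).PosDef :=
  (PosDef.one.smul hlam).add_posSemidef (by simpa using posSemidef_conjTranspose_mul_self V)

theorem dotProduct_mulVec_sub_two_mul_dotProduct {S : Matrix ι ι ℝ} (hS : Sᵀ = S)
    (hdet : IsUnit S.det) (a u : ι → ℝ) :
    u ⬝ᵥ S *ᵥ u - 2 * (a ⬝ᵥ u)
      = (u - S⁻¹ *ᵥ a) ⬝ᵥ S *ᵥ (u - S⁻¹ *ᵥ a) - a ⬝ᵥ S⁻¹ *ᵥ a := by
  have hcenter : S *ᵥ (S⁻¹ *ᵥ a) = a := by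
    rw [mulVec_mulVec, mul_nonsing_inv S hdet, one_mulVec]
  have hsymm (x y : ι → ℝ) : x ⬝ᵥ S *ᵥ y = y ⬝ᵥ S *ᵥ x := by
    rw [dotProduct_mulVec, ← mulVec_transpose, hS, dotProduct_comm]
  rw [mulVec_sub, sub_dotProduct, dotProduct_sub, dotProduct_sub, hsymm (S⁻¹ *ᵥ a) u, hcenter,
    dotProduct_comm u a, dotProduct_comm (S⁻¹ *ᵥ a) a]
  ring

theorem dotProduct_sub_mulVec_add_mul_dotProduct [DecidableEq κ] {lam : ℝ} {V : Matrix κ ι ℝ}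
    {S : Matrix ι ι ℝ} (hS : S = lam • 1 + Vᵀ * V) (hdet : IsUnit S.det) (w : κ → ℝ)
    (u : ι → ℝ) :
    (w - V *ᵥ u) ⬝ᵥ (w - V *ᵥ u) + lam * (u ⬝ᵥ u)
      = (u - S⁻¹ *ᵥ (Vᵀ *ᵥ w)) ⬝ᵥ S *ᵥ (u - S⁻¹ *ᵥ (Vᵀ *ᵥ w))
        - w ⬝ᵥ (V * S⁻¹ * Vᵀ - 1) *ᵥ w := by
  have hsymm : Sᵀ = S := by simp [hS, transpose_add, transpose_mul]
  have hadj (x : κ → ℝ) (y : ι → ℝ) : x ⬝ᵥ V *ᵥ y = (Vᵀ *ᵥ x) ⬝ᵥ y := by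
    rw [dotProduct_mulVec, mulVec_transpose]
  have hquad : u ⬝ᵥ S *ᵥ u = lam * (u ⬝ᵥ u) + (V *ᵥ u) ⬝ᵥ (V *ᵥ u) := by
    rw [hS, add_mulVec, smul_mulVec, one_mulVec, ← mulVec_mulVec, dotProduct_add,
      dotProduct_smul, smul_eq_mul, dotProduct_comm u (Vᵀ *ᵥ _), hadj]
  have hconst : w ⬝ᵥ (V * S⁻¹ * Vᵀ - 1) *ᵥ w = (Vᵀ *ᵥ w) ⬝ᵥ S⁻¹ *ᵥ (Vᵀ *ᵥ w) - w ⬝ᵥ w := by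
    rw [sub_mulVec, one_mulVec, dotProduct_sub, ← mulVec_mulVec, ← mulVec_mulVec, hadj]
  have hsquare := dotProduct_mulVec_sub_two_mul_dotProduct hsymm hdet (Vᵀ *ᵥ w) u
  rw [hconst, sub_dotProduct, dotProduct_sub, dotProduct_sub, hadj w u,
    dotProduct_comm (V *ᵥ u) w, hadj w u]
  linarith

end Matrix

theorem gaussian_marginal_integral_general (d k : ℕ)
    (V : Matrix (Fin k) (Fin d) ℝ) (σ₀ σu : ℝ) (hσ₀ : 0 < σ₀) (hσu : 0 < σu)
    (lam : ℝ) (hlam : lam = σ₀ ^ 2 / σu ^ 2)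
    (Sig : Matrix (Fin d) (Fin d) ℝ)
    (hSig : Sig = lam • (1 : Matrix (Fin d) (Fin d) ℝ) + Vᵀ * V)
    (w : Fin k → ℝ) :
    (∫ u : Fin d → ℝ,
        Real.exp (-((w - V.mulVec u) ⬝ᵥ (w - V.mulVec u)) / (2 * σ₀ ^ 2)
          - (u ⬝ᵥ u) / (2 * σu ^ 2)))
      = (σ₀ * Real.sqrt (2 * π)) ^ d * (Real.sqrt Sig.det)⁻¹ *
          Real.exp ((w ⬝ᵥ (V * Sig⁻¹ * Vᵀ - 1).mulVec w) / (2 * σ₀ ^ 2)) := by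
  have hPD : Sig.PosDef := hSig ▸ posDef_smul_one_add_transpose_mul (by rw [hlam]; positivity) V
  set μ := Sig⁻¹ *ᵥ (Vᵀ *ᵥ w) with hμ
  have hintegrand (u : Fin d → ℝ) :
      exp (-((w - V *ᵥ u) ⬝ᵥ (w - V *ᵥ u)) / (2 * σ₀ ^ 2) - (u ⬝ᵥ u) / (2 * σu ^ 2))
        = exp ((w ⬝ᵥ (V * Sig⁻¹ * Vᵀ - 1) *ᵥ w) / (2 * σ₀ ^ 2))
          * exp (-((u - μ) ⬝ᵥ Sig *ᵥ (u - μ)) / (2 * σ₀ ^ 2)) := by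
    have hexponent : -((w - V *ᵥ u) ⬝ᵥ (w - V *ᵥ u)) / (2 * σ₀ ^ 2) - (u ⬝ᵥ u) / (2 * σu ^ 2)
        = -((w - V *ᵥ u) ⬝ᵥ (w - V *ᵥ u) + lam * (u ⬝ᵥ u)) / (2 * σ₀ ^ 2) := by
      rw [hlam]
      field_simp
      ring
    rw [← exp_add, hexponent, dotProduct_sub_mulVec_add_mul_dotProduct hSig
      ((isUnit_iff_isUnit_det Sig).mp hPD.isUnit), ← hμ]
    congr 1
    ring
  simp_rw [hintegrand]
  rw [integral_const_mul,
    integral_sub_right_eq_self (fun u ↦ exp (-(u ⬝ᵥ Sig *ᵥ u) / (2 * σ₀ ^ 2))) μ,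
    hPD.integral_exp_neg_dotProduct_mulVec_div hσ₀, Fintype.card_fin]
  ring

/-- Gaussian integral identity: for every `w ∈ ℝ^k`,
`∫_{ℝ^d} exp(−‖w − V u‖²/(2σ₀²) − ‖u‖²/(2σ_u²)) du
  = (σ₀√(2π))^d (det Σ)^{−1/2} exp(wᵀ(VΣ⁻¹Vᵀ − I)w/(2σ₀²))`. -/
theorem gaussian_marginal_integral (d k : ℕ) (hd : 0 < d) (hk : 0 < k)
    (V : Matrix (Fin k) (Fin d) ℝ) (σ₀ σu : ℝ) (hσ₀ : 0 < σ₀) (hσu : 0 < σu)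
    (lam : ℝ) (hlam : lam = σ₀ ^ 2 / σu ^ 2)
    (Sig : Matrix (Fin d) (Fin d) ℝ)
    (hSig : Sig = lam • (1 : Matrix (Fin d) (Fin d) ℝ) + Vᵀ * V)
    (w : Fin k → ℝ) :
    (∫ u : Fin d → ℝ,
        Real.exp (-((w - V.mulVec u) ⬝ᵥ (w - V.mulVec u)) / (2 * σ₀ ^ 2)
          - (u ⬝ᵥ u) / (2 * σu ^ 2)))
      = (σ₀ * Real.sqrt (2 * π)) ^ d * (Real.sqrt Sig.det)⁻¹ *
          Real.exp ((w ⬝ᵥ (V * Sig⁻¹ * Vᵀ - 1).mulVec w) / (2 * σ₀ ^ 2)) :=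
  gaussian_marginal_integral_general d k V σ₀ σu hσ₀ hσu lam hlam Sig hSig w
end

section
/- Closed form of the expected-risk integral: for all reals α₁ > 0, α₃ > 0, and α₂, α₄, α₅ ∈ ℝ, ∫_{ℝ} exp( −(α₁·r² + α₂·r + |α₃·r + α₄| + α₅)/2 ) dr = α₁^{−1/2} · [ exp( ((α₂−α₃)²/(4α₁) + α₄ − α₅)/2 ) · h( (α₂−α₃)/(2√α₁) − α₄·√α₁/α₃ ) + exp( ((α₂+α₃)²/(4α₁) − α₄ − α₅)/2 ) · h( α₄·√α₁/α₃ − (α₂+α₃)/(2√α₁) ) ], where h(x) = ∫_{−∞}^{x} exp(−s²/2) ds. -/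
/-! Splitting the line at the zero `-α₄/α₃` of `α₃ r + α₄`, the exponent is a quadratic in `r` on
each half-line. Completing the square turns each piece into a constant times a Gaussian integral
over a half-line, and the affine substitution `t = √α₁ r + d` carries it to a value of `h`; on the
right half-line the evenness of `exp (-t²/2)` turns the upper tail into a lower one. -/

open Real MeasureTheory Set

theorem map_volume_mul_add {a : ℝ} (ha : a ≠ 0) (b : ℝ) :
    Measure.map (fun x => a * x + b) volume = ENNReal.ofReal |a|⁻¹ • volume := by
  rw [show (fun x : ℝ => a * x + b) = (· + b) ∘ (a * ·) from rfl,
    ← Measure.map_map (measurable_add_const b) (measurable_const_mul a),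
    Real.map_volume_mul_left ha, Measure.map_smul, map_add_right_eq_self, abs_inv]

theorem setIntegral_preimage_mul_add {E : Type*} [NormedAddCommGroup E] [NormedSpace ℝ E]
    (g : ℝ → E) (s : Set ℝ) {a : ℝ} (ha : a ≠ 0) (b : ℝ) :
    ∫ x in (fun x => a * x + b) ⁻¹' s, g (a * x + b) = |a|⁻¹ • ∫ y in s, g y := by
  have h := setIntegral_map_equiv (μ := volume) (affineHomeomorph a b ha).toMeasurableEquiv g s
  change ∫ y in s, g y ∂Measure.map (fun x => a * x + b) volume
      = ∫ x in (fun x => a * x + b) ⁻¹' s, g (a * x + b) at h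
  rw [← h, map_volume_mul_add ha, Measure.restrict_smul, integral_smul_measure,
    ENNReal.toReal_ofReal (by positivity)]

theorem integral_Iic_exp_neg_sq_half_mul_add (c : ℝ) {a : ℝ} (ha : 0 < a) (b : ℝ) :
    ∫ r in Iic c, exp (-(a * r + b) ^ 2 / 2)
      = a⁻¹ * ∫ t in Iic (a * c + b), exp (-t ^ 2 / 2) := by
  have hpre : (fun r => a * r + b) ⁻¹' Iic (a * c + b) = Iic c := by
    ext r; simp [mul_le_mul_iff_right₀ ha]
  rw [← hpre, setIntegral_preimage_mul_add (fun t => exp (-t ^ 2 / 2)) _ ha.ne',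
    abs_of_pos ha, smul_eq_mul]

theorem integral_Ioi_exp_neg_sq_half_mul_add (c : ℝ) {a : ℝ} (ha : 0 < a) (b : ℝ) :
    ∫ r in Ioi c, exp (-(a * r + b) ^ 2 / 2)
      = a⁻¹ * ∫ t in Iic (-(a * c + b)), exp (-t ^ 2 / 2) := by
  have hpre : (fun r => a * r + b) ⁻¹' Ioi (a * c + b) = Ioi c := by
    ext r; simp [mul_lt_mul_iff_right₀ ha]
  rw [← hpre, setIntegral_preimage_mul_add (fun t => exp (-t ^ 2 / 2)) _ ha.ne',
    abs_of_pos ha, smul_eq_mul, ← integral_comp_neg_Ioi]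
  simp only [neg_sq]

theorem integrable_exp_neg_sq_half_mul_add {a : ℝ} (ha : a ≠ 0) (b : ℝ) :
    Integrable fun r => exp (-(a * r + b) ^ 2 / 2) := by
  refine (((integrable_exp_neg_mul_sq (b := 1 / 2) one_half_pos).comp_add_right b).comp_mul_left'
    ha).congr (.of_forall fun r => ?_)
  simp only
  ring_nf

theorem exp_neg_half_quadratic_eq {a : ℝ} (ha : 0 < a) (p q r : ℝ) :
    exp (-(a * r ^ 2 + p * r + q) / 2)
      = exp ((p ^ 2 / (4 * a) - q) / 2) * exp (-(√a * r + p / (2 * √a)) ^ 2 / 2) := by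
  obtain ⟨s, hs, rfl⟩ : ∃ s, 0 < s ∧ s ^ 2 = a := ⟨√a, sqrt_pos.2 ha, sq_sqrt ha.le⟩
  rw [sqrt_sq hs.le, ← exp_add]
  congr 1
  field_simp
  ring

theorem integrable_exp_neg_half_quadratic {a : ℝ} (ha : 0 < a) (p q : ℝ) :
    Integrable fun r => exp (-(a * r ^ 2 + p * r + q) / 2) := by
  simp_rw [exp_neg_half_quadratic_eq ha]
  exact (integrable_exp_neg_sq_half_mul_add (sqrt_pos.2 ha).ne' _).const_mul _

theorem integrable_exp_neg_half_quadratic_add_abs {a : ℝ} (ha : 0 < a) (p q α β : ℝ) :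
    Integrable fun r => exp (-(a * r ^ 2 + p * r + |α * r + β| + q) / 2) := by
  refine (integrable_exp_neg_half_quadratic ha (p - α) (q - β)).mono'
    (by fun_prop) (.of_forall fun r => ?_)
  rw [norm_of_nonneg (exp_pos _).le, exp_le_exp]
  linarith [neg_abs_le (α * r + β)]

theorem integral_Iic_exp_neg_half_quadratic {a : ℝ} (ha : 0 < a) (p q c : ℝ) :
    ∫ r in Iic c, exp (-(a * r ^ 2 + p * r + q) / 2)
      = (√a)⁻¹ * exp ((p ^ 2 / (4 * a) - q) / 2)
          * ∫ t in Iic (√a * c + p / (2 * √a)), exp (-t ^ 2 / 2) := by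
  simp_rw [exp_neg_half_quadratic_eq ha, integral_const_mul,
    integral_Iic_exp_neg_sq_half_mul_add c (sqrt_pos.2 ha)]
  ring

theorem integral_Ioi_exp_neg_half_quadratic {a : ℝ} (ha : 0 < a) (p q c : ℝ) :
    ∫ r in Ioi c, exp (-(a * r ^ 2 + p * r + q) / 2)
      = (√a)⁻¹ * exp ((p ^ 2 / (4 * a) - q) / 2)
          * ∫ t in Iic (-(√a * c + p / (2 * √a))), exp (-t ^ 2 / 2) := by
  simp_rw [exp_neg_half_quadratic_eq ha, integral_const_mul,
    integral_Ioi_exp_neg_sq_half_mul_add c (sqrt_pos.2 ha)]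
  ring

/-- Closed form of the expected-risk integral: for `α₁ > 0`, `α₃ > 0` and reals `α₂, α₄, α₅`,
`∫_ℝ exp(−(α₁ r² + α₂ r + |α₃ r + α₄| + α₅)/2) dr
  = α₁^{−1/2} [ exp(((α₂−α₃)²/(4α₁) + α₄ − α₅)/2) h((α₂−α₃)/(2√α₁) − α₄√α₁/α₃)
              + exp(((α₂+α₃)²/(4α₁) − α₄ − α₅)/2) h(α₄√α₁/α₃ − (α₂+α₃)/(2√α₁)) ]`,
where `h(x) = ∫_{−∞}^{x} exp(−s²/2) ds`. -/
theorem expected_risk_integral_closed_form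
    (h : ℝ → ℝ) (hh : ∀ x : ℝ, h x = ∫ s in Set.Iic x, Real.exp (-s ^ 2 / 2))
    (α₁ α₂ α₃ α₄ α₅ : ℝ) (h₁ : 0 < α₁) (h₃ : 0 < α₃) :
    (∫ r : ℝ, Real.exp (-(α₁ * r ^ 2 + α₂ * r + |α₃ * r + α₄| + α₅) / 2))
      = (Real.sqrt α₁)⁻¹ *
          (Real.exp (((α₂ - α₃) ^ 2 / (4 * α₁) + α₄ - α₅) / 2) *
              h ((α₂ - α₃) / (2 * Real.sqrt α₁) - α₄ * Real.sqrt α₁ / α₃) +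
            Real.exp (((α₂ + α₃) ^ 2 / (4 * α₁) - α₄ - α₅) / 2) *
              h (α₄ * Real.sqrt α₁ / α₃ - (α₂ + α₃) / (2 * Real.sqrt α₁))) := by
  have hint := integrable_exp_neg_half_quadratic_add_abs h₁ α₂ α₅ α₃ α₄
  have hleft : ∀ r ∈ Iic (-α₄ / α₃), exp (-(α₁ * r ^ 2 + α₂ * r + |α₃ * r + α₄| + α₅) / 2)
      = exp (-(α₁ * r ^ 2 + (α₂ - α₃) * r + (α₅ - α₄)) / 2) := by
    intro r hr
    rw [mem_Iic, le_div_iff₀ h₃] at hr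
    rw [abs_of_nonpos (by linarith)]
    ring_nf
  have hright : ∀ r ∈ Ioi (-α₄ / α₃), exp (-(α₁ * r ^ 2 + α₂ * r + |α₃ * r + α₄| + α₅) / 2)
      = exp (-(α₁ * r ^ 2 + (α₂ + α₃) * r + (α₅ + α₄)) / 2) := by
    intro r hr
    rw [mem_Ioi, div_lt_iff₀ h₃] at hr
    rw [abs_of_nonneg (by linarith)]
    ring_nf
  rw [← intervalIntegral.integral_Iic_add_Ioi hint.integrableOn hint.integrableOn,
    setIntegral_congr_fun measurableSet_Iic hleft, setIntegral_congr_fun measurableSet_Ioi hright,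
    integral_Iic_exp_neg_half_quadratic h₁, integral_Ioi_exp_neg_half_quadratic h₁, ← hh, ← hh]
  ring_nf
end
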